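/- arXiv:1611.04856 — 6 statements merged into one kernel-verified Lean document; each statement's English description precedes it below -/
import Mathlib

section
/- Let k be a field of characteristic different from 2. For every pair of matrices A, B in GL_2(k), one has ψ(A·B) = ψ(A)·ψ(B), and for every A in GL_2(k) the matrix ψ(A) is invertible; in other words, ψ defines a group homomorphism from GL_2(k) to GL_3(k). -/
set_option maxHeartbeats 1600000


/-- The map sending an invertible 2×2 matrix `[[α, β], [γ, δ]]` to
`(1/(αδ−βγ)) · [[α², β², 2αβ], [γ², δ², 2γδ], [αγ, βδ, βγ+αδ]]`. -/
noncomputable def psi {k : Type*} [Field k] (M : Matrix (Fin 2) (Fin 2) k) :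
    Matrix (Fin 3) (Fin 3) k :=
  (M.det)⁻¹ • !![M 0 0 ^ 2, M 0 1 ^ 2, 2 * (M 0 0 * M 0 1);
                 M 1 0 ^ 2, M 1 1 ^ 2, 2 * (M 1 0 * M 1 1);
                 M 0 0 * M 1 0, M 0 1 * M 1 1, M 0 1 * M 1 0 + M 0 0 * M 1 1]

/-- ψ is multiplicative on GL₂(k) and takes values in GL₃(k): it defines a group
homomorphism GL₂(k) → GL₃(k). -/
theorem psi_mul_and_isUnit {k : Type*} [Field k] (h2 : (2 : k) ≠ 0) :
    (∀ A B : Matrix (Fin 2) (Fin 2) k, IsUnit A.det → IsUnit B.det →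
      psi (A * B) = psi A * psi B) ∧
    (∀ A : Matrix (Fin 2) (Fin 2) k, IsUnit A.det → IsUnit (psi A).det) := by
  constructor
  · intro A B hA hB
    have hA' : A.det ≠ 0 := hA.ne_zero
    have hB' : B.det ≠ 0 := hB.ne_zero
    rw [Matrix.det_fin_two] at hA' hB'
    ext i j
    fin_cases i <;> fin_cases j <;>
      simp [psi, Matrix.mul_apply, Matrix.det_fin_two, Fin.sum_univ_succ,
        mul_inv_rev] <;>
      field_simp <;> ring
  · intro A hA
    have hA' : A.det ≠ 0 := hA.ne_zero
    rw [Matrix.det_fin_two] at hA'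
    have : (psi A).det = 1 := by
      simp [psi, Matrix.det_fin_three, Matrix.det_fin_two]
      field_simp
      ring
    rw [this]; exact isUnit_one
end

section
/- Let k be a field of characteristic different from 2 and let q be the quadratic form q(x,y,z) = z² − xy on k³. For every A in GL_2(k) and every vector v = (x,y,z) in k³, one has q(ψ(A)·v) = q(v); that is, the matrices in the image of ψ preserve the quadratic form z² − xy exactly (not merely up to a scalar). -/
/-!
Identify `v = (x, y, z)` with the symmetric matrix `S v = [[x, z], [z, y]]`, so that
`z² − xy = −det (S v)`. Then `ψ(A)` is the congruence action `S ↦ A S Aᵀ` rescaled by `(det A)⁻¹`: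
`S (ψ(A) v) = (det A)⁻¹ • A (S v) Aᵀ`. Taking determinants of 2×2 matrices, the factor
`(det A)⁻²` cancels `det A · det Aᵀ`, so `det (S (ψ(A) v)) = det (S v)`.
-/

open Matrix

def toSymmMatrix {R : Type*} (v : Fin 3 → R) : Matrix (Fin 2) (Fin 2) R :=
  !![v 0, v 2; v 2, v 1]

theorem det_toSymmMatrix {R : Type*} [CommRing R] (v : Fin 3 → R) :
    (toSymmMatrix v).det = v 0 * v 1 - v 2 ^ 2 := by
  rw [toSymmMatrix, det_fin_two_of]
  ring

theorem toSymmMatrix_psi_mulVec {k : Type*} [Field k] (A : Matrix (Fin 2) (Fin 2) k)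
    (v : Fin 3 → k) :
    toSymmMatrix (psi A *ᵥ v) = A.det⁻¹ • (A * toSymmMatrix v * Aᵀ) := by
  ext i j
  fin_cases i <;> fin_cases j <;>
    simp only [toSymmMatrix, psi, mulVec, dotProduct, Fin.sum_univ_three, mul_apply,
      Fin.sum_univ_two, transpose_apply, Matrix.smul_apply, smul_eq_mul, of_apply, cons_val',
      cons_val_fin_one, cons_val_zero, cons_val_one, cons_val, Fin.zero_eta, Fin.mk_one,
      Fin.isValue] <;> ring

theorem det_inv_det_smul_mul_mul_transpose {k : Type*} [Field k] {A : Matrix (Fin 2) (Fin 2) k}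
    (hA : A.det ≠ 0) (S : Matrix (Fin 2) (Fin 2) k) :
    (A.det⁻¹ • (A * S * Aᵀ)).det = S.det := by
  rw [det_smul, det_mul, det_mul, det_transpose, Fintype.card_fin]
  field_simp

theorem psi_preserves_quadratic_form_general {k : Type*} [Field k]
    (A : Matrix (Fin 2) (Fin 2) k) (hA : IsUnit A.det) (v : Fin 3 → k) :
    ((psi A).mulVec v) 2 ^ 2 - ((psi A).mulVec v) 0 * ((psi A).mulVec v) 1
      = v 2 ^ 2 - v 0 * v 1 := by
  have hdet : (toSymmMatrix (psi A *ᵥ v)).det = (toSymmMatrix v).det := by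
    rw [toSymmMatrix_psi_mulVec, det_inv_det_smul_mul_mul_transpose hA.ne_zero]
  rw [det_toSymmMatrix, det_toSymmMatrix] at hdet
  linear_combination -hdet

/-- The matrices in the image of ψ preserve the quadratic form `q(x,y,z) = z² − xy`
exactly (not merely up to a scalar). -/
theorem psi_preserves_quadratic_form {k : Type*} [Field k] (h2 : (2 : k) ≠ 0)
    (A : Matrix (Fin 2) (Fin 2) k) (hA : IsUnit A.det) (v : Fin 3 → k) :
    ((psi A).mulVec v) 2 ^ 2 - ((psi A).mulVec v) 0 * ((psi A).mulVec v) 1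
      = v 2 ^ 2 - v 0 * v 1 :=
  psi_preserves_quadratic_form_general A hA v
end

section
/- Let k be an algebraically closed field of characteristic different from 2 and let q be the quadratic form q(x,y,z) = z² − xy on k³. Suppose A in GL_3(k) and c in k, c ≠ 0, satisfy q(A·v) = c·q(v) for all v in k³. Then there exist B in GL_2(k) and a nonzero scalar μ in k such that A = μ·ψ(B). In particular, the image of ψ, taken modulo scalar matrices, is exactly the subgroup of PGL_3(k) stabilizing the conic z² = xy. -/
lemma cone_point {k : Type*} [Field k] [IsAlgClosed k] (x y z : k) (h : z^2 - x*y = 0) :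
    ∃ a b : k, x = a^2 ∧ y = b^2 ∧ z = a*b := by
  by_cases hx : x = 0
  · have hz : z = 0 := by
      have h2 : z^2 = 0 := by linear_combination h + y*hx
      exact pow_eq_zero_iff (two_ne_zero) |>.mp h2
    obtain ⟨b, hb⟩ := IsAlgClosed.exists_pow_nat_eq y (n := 2) (by norm_num)
    exact ⟨0, b, by simp [hx], hb.symm, by simp [hz]⟩
  · obtain ⟨a, ha⟩ := IsAlgClosed.exists_pow_nat_eq x (n := 2) (by norm_num)
    have ha0 : a ≠ 0 := by rintro rfl; simp at ha; exact hx ha.symm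
    refine ⟨a, z/a, ha.symm, ?_, by field_simp⟩
    field_simp
    linear_combination y*ha - h

/-- Over an algebraically closed field of characteristic ≠ 2, any `A ∈ GL₃(k)` satisfying
`q(A·v) = c·q(v)` for all `v` (where `q(x,y,z) = z² − xy` and `c ≠ 0`) is a nonzero scalar
multiple of a matrix in the image of ψ: modulo scalars, the image of ψ is exactly the
stabilizer in PGL₃(k) of the conic `z² = xy`. -/
theorem stabilizer_of_conic_eq_image_psi {k : Type*} [Field k] [IsAlgClosed k]
    (h2 : (2 : k) ≠ 0) (A : Matrix (Fin 3) (Fin 3) k) (hA : IsUnit A.det)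
    (c : k) (hc : c ≠ 0)
    (h : ∀ v : Fin 3 → k,
      (A.mulVec v) 2 ^ 2 - (A.mulVec v) 0 * (A.mulVec v) 1 = c * (v 2 ^ 2 - v 0 * v 1)) :
    ∃ (B : Matrix (Fin 2) (Fin 2) k) (μ : k),
      IsUnit B.det ∧ μ ≠ 0 ∧ A = μ • psi B := by
  have e1 := h ![1,0,0]
  have e2 := h ![0,1,0]
  have e3 := h ![0,0,1]
  have e4 := h ![1,1,0]
  have e5 := h ![1,0,1]
  have e6 := h ![0,1,1]
  simp [Matrix.mulVec, dotProduct, Fin.sum_univ_three] at e1 e2 e3 e4 e5 e6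
  obtain ⟨α, γ, hα, hγ, hαγ⟩ := cone_point (A 0 0) (A 1 0) (A 2 0) (by linear_combination e1)
  obtain ⟨β, δ, hβ, hδ, hβδ⟩ := cone_point (A 0 1) (A 1 1) (A 2 1) (by linear_combination e2)
  rw [hα, hγ, hαγ] at e4 e5
  rw [hβ, hδ, hβδ] at e4 e6
  have hd2 : (α*δ - β*γ)^2 = c := by linear_combination -e4
  have hd : α*δ - β*γ ≠ 0 := by
    intro h0; exact hc (by rw [← hd2, h0]; ring)
  have E3 : (A 2 2)^2 - (A 0 2)*(A 1 2) = (α*δ-β*γ)^2 := by linear_combination e3 - hd2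
  have E5 : 2*α*γ*(A 2 2) - α^2*(A 1 2) - γ^2*(A 0 2) = 0 := by linear_combination e5 - e3
  have E6 : 2*β*δ*(A 2 2) - β^2*(A 1 2) - δ^2*(A 0 2) = 0 := by linear_combination e6 - e3
  have hI : (α*δ+β*γ) * A 0 2 = 2*α*β * A 2 2 := by
    have h0 : (α*δ-β*γ) * ((α*δ+β*γ) * A 0 2 - 2*α*β * A 2 2) = 0 := by
      linear_combination β^2*E5 - α^2*E6
    rcases mul_eq_zero.mp h0 with h0 | h0
    · exact absurd h0 hd
    · linear_combination h0
  have hII : (α*δ+β*γ) * A 1 2 = 2*γ*δ * A 2 2 := by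
    have h0 : (α*δ-β*γ) * ((α*δ+β*γ) * A 1 2 - 2*γ*δ * A 2 2) = 0 := by
      linear_combination γ^2*E6 - δ^2*E5
    rcases mul_eq_zero.mp h0 with h0 | h0
    · exact absurd h0 hd
    · linear_combination h0
  have key : ∃ l : k, l^2 = 1 ∧ A 0 2 = l*(2*α*β) ∧ A 1 2 = l*(2*γ*δ) ∧
      A 2 2 = l*(α*δ+β*γ) := by
    by_cases hT : α*δ+β*γ = 0
    · have hαδ : α*δ ≠ 0 := by
        intro h0; apply hd; rw [show β*γ = -(α*δ) by linear_combination hT, h0]; ring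
      have hα0 : α ≠ 0 := left_ne_zero_of_mul hαδ
      have hγ0 : γ ≠ 0 := by
        intro h0
        apply hαδ
        have : β*γ = -(α*δ) := by linear_combination hT
        rw [h0, mul_zero] at this
        linear_combination this
      have hr : A 2 2 = 0 := by
        have hβ0 : β ≠ 0 := by
          intro h0
          apply hαδ
          have : β*γ = -(α*δ) := by linear_combination hT
          rw [h0, zero_mul] at this
          linear_combination this
        have h0 : 2*α*β * A 2 2 = 0 := by rw [← hI, hT]; ring
        rcases mul_eq_zero.mp h0 with h0 | h0
        · exact absurd h0 (mul_ne_zero (mul_ne_zero h2 hα0) hβ0)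
        · exact h0
      have hdd : α*δ - β*γ = 2*(α*δ) := by linear_combination -hT
      have hq' : α^2*(A 1 2) = -(γ^2*(A 0 2)) := by linear_combination -E5 + 2*α*γ*hr
      have hfac : (γ*(A 0 2) - α*(α*δ-β*γ)) * (γ*(A 0 2) + α*(α*δ-β*γ)) = 0 := by
        linear_combination (A 0 2)*hq' + α^2*E3 - α^2*(A 2 2)*hr
      rcases mul_eq_zero.mp hfac with h0 | h0
      · refine ⟨-1, by ring, ?_, ?_, by rw [hr, hT]; ring⟩
        · exact mul_left_cancel₀ hγ0 (by linear_combination h0 + α*hdd + 2*α*hT)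
        · exact mul_left_cancel₀ (pow_ne_zero 2 hα0)
            (by linear_combination hq' - γ*h0 - α*γ*hdd)
      · refine ⟨1, by ring, ?_, ?_, by rw [hr, hT]; ring⟩
        · exact mul_left_cancel₀ hγ0 (by linear_combination h0 - α*hdd - 2*α*hT)
        · exact mul_left_cancel₀ (pow_ne_zero 2 hα0)
            (by linear_combination hq' - γ*h0 + α*γ*hdd)
    · have hr2 : (α*δ-β*γ)^2*((A 2 2)^2 - (α*δ+β*γ)^2) = 0 := by
        linear_combination (α*δ+β*γ)^2*E3 + (A 1 2)*(α*δ+β*γ)*hI + 2*α*β*(A 2 2)*hII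
      have hr2' : (A 2 2 - (α*δ+β*γ)) * (A 2 2 + (α*δ+β*γ)) = 0 := by
        rcases mul_eq_zero.mp hr2 with h0 | h0
        · exact absurd h0 (pow_ne_zero 2 hd)
        · linear_combination h0
      rcases mul_eq_zero.mp hr2' with h0 | h0
      · refine ⟨1, by ring, ?_, ?_, by linear_combination h0⟩
        · exact mul_left_cancel₀ hT (by linear_combination hI + 2*α*β*h0)
        · exact mul_left_cancel₀ hT (by linear_combination hII + 2*γ*δ*h0)
      · refine ⟨-1, by ring, ?_, ?_, by linear_combination h0⟩
        · exact mul_left_cancel₀ hT (by linear_combination hI + 2*α*β*h0)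
        · exact mul_left_cancel₀ hT (by linear_combination hII + 2*γ*δ*h0)
  obtain ⟨l, hl2, hp, hq, hr⟩ := key
  have hl0 : l ≠ 0 := by
    intro h0; rw [h0] at hl2; norm_num at hl2
  have hμ : l*(α*δ-β*γ) ≠ 0 := mul_ne_zero hl0 hd
  refine ⟨!![α, l*β; γ, l*δ], l*(α*δ-β*γ), ?_, hμ, ?_⟩
  · rw [Matrix.det_fin_two_of]
    simp only [isUnit_iff_ne_zero]
    intro h0
    exact hμ (by linear_combination h0)
  · have hdet : (!![α, l*β; γ, l*δ] : Matrix (Fin 2) (Fin 2) k).det = l*(α*δ-β*γ) := by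
      rw [Matrix.det_fin_two_of]; ring
    have hpsi : (l*(α*δ-β*γ)) • psi !![α, l*β; γ, l*δ] =
        !![α^2, (l*β)^2, 2*(α*(l*β)); γ^2, (l*δ)^2, 2*(γ*(l*δ));
           α*γ, (l*β)*(l*δ), (l*β)*γ + α*(l*δ)] := by
      rw [psi, hdet, smul_smul, mul_inv_cancel₀ hμ, one_smul]
      congr 1 <;> simp
    rw [hpsi]
    ext i j
    fin_cases i <;> fin_cases j <;> simp
    · exact hα
    · linear_combination hβ - β^2*hl2
    · linear_combination hp
    · exact hγ
    · linear_combination hδ - δ^2*hl2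
    · linear_combination hq
    · exact hαγ
    · linear_combination hβδ - β*δ*hl2
    · linear_combination hr
end

section
/- (Hilbert's Theorem 90 for GL_n) Let L/k be a finite Galois extension of fields, let n ≥ 1, and let ξ : Gal(L/k) → GL_n(L) be a 1-cocycle, i.e. ξ(στ) = ξ(σ) · σ(ξ(τ)) for all σ, τ in Gal(L/k), where σ acts entrywise on matrices. Then ξ is a coboundary: there exists a matrix M in GL_n(L) such that ξ(σ) = M · σ(M)⁻¹ for all σ in Gal(L/k). -/
/-!
The cocycle defines a σ-semilinear action `σ ⋆ v = ξ(σ) σ(v)` of `Aut(L/k)` on `Lⁿ`. Its fixed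
vectors span `Lⁿ` over `L`: a functional `φ` vanishing on them vanishes on every average
`∑_σ σ ⋆ (c w) = ∑_σ σ(c) (σ ⋆ w)`, so `∑_σ φ(σ ⋆ w) σ(c) = 0` for all `c`, and Dedekind's
independence of characters gives `φ(w) = φ(1 ⋆ w) = 0`. A matrix `M` whose columns are fixed
vectors forming a basis is invertible and satisfies `ξ(σ) σ(M) = M`.
-/

open Matrix

theorem AlgEquiv.linearIndependent_coeFn (R L : Type*) [CommSemiring R] [CommRing L] [IsDomain L]
    [Algebra R L] : LinearIndependent L (fun σ : L ≃ₐ[R] L => (σ : L → L)) :=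
  (linearIndependent_monoidHom L L).comp (fun σ : L ≃ₐ[R] L => (σ : L →* L))
    fun _ _ h => AlgEquiv.ext fun x => DFunLike.congr_fun h x

theorem Matrix.exists_isUnit_det_col_mem {K ι : Type*} [Field K] [Fintype ι] [DecidableEq ι]
    {S : Set (ι → K)} (hS : Submodule.span K S = ⊤) :
    ∃ M : Matrix ι ι K, IsUnit M.det ∧ ∀ j, M.col j ∈ S := by
  let b := Module.Basis.ofSpan hS.ge
  let C := b.reindex (b.indexEquiv (Pi.basisFun K ι))
  refine ⟨(Matrix.of C)ᵀ, ?_, fun j => ?_⟩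
  · rw [← isUnit_iff_isUnit_det, ← linearIndependent_cols_iff_isUnit, of_col]
    exact C.linearIndependent
  · rw [of_col]
    exact Module.Basis.ofSpan_subset hS.ge ⟨_, (b.reindex_apply _ j).symm⟩

theorem Matrix.comp_mulVec {R S F m n : Type*} [NonAssocSemiring R] [NonAssocSemiring S]
    [FunLike F R S] [RingHomClass F R S] [Fintype n] (f : F) (M : Matrix m n R) (v : n → R) :
    f ∘ (M *ᵥ v) = M.map f *ᵥ (f ∘ v) :=
  funext (RingHom.map_mulVec (f : R →+* S) M v)

section TwistedAction

variable {k L ι : Type*} [Field k] [Field L] [Algebra k L] [Fintype ι]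

def twistedAction (ξ : (L ≃ₐ[k] L) → Matrix ι ι L) (σ : L ≃ₐ[k] L) : (ι → L) →+ (ι → L) :=
  (ξ σ).mulVecLin.toAddMonoidHom.comp (((σ : L →+* L) : L →+ L).compLeft ι)

def twistedFixedPoints (ξ : (L ≃ₐ[k] L) → Matrix ι ι L) : Set (ι → L) :=
  {v | ∀ σ, twistedAction ξ σ v = v}

variable {ξ : (L ≃ₐ[k] L) → Matrix ι ι L}

theorem twistedAction_apply (σ : L ≃ₐ[k] L) (v : ι → L) :
    twistedAction ξ σ v = ξ σ *ᵥ (σ ∘ v) := rfl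

theorem twistedAction_smul (σ : L ≃ₐ[k] L) (c : L) (v : ι → L) :
    twistedAction ξ σ (c • v) = σ c • twistedAction ξ σ v := by
  have hσ : σ ∘ (c • v) = σ c • (σ ∘ v) := funext fun i => map_mul σ c (v i)
  rw [twistedAction_apply, hσ, mulVec_smul, twistedAction_apply]

theorem twistedAction_mul (hcocycle : ∀ σ τ, ξ (σ * τ) = ξ σ * (ξ τ).map σ)
    (σ τ : L ≃ₐ[k] L) (v : ι → L) :
    twistedAction ξ (σ * τ) v = twistedAction ξ σ (twistedAction ξ τ v) := by
  rw [twistedAction_apply, twistedAction_apply, twistedAction_apply,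
    comp_mulVec, mulVec_mulVec, hcocycle]
  rfl

theorem sum_twistedAction_mem_twistedFixedPoints [FiniteDimensional k L]
    (hcocycle : ∀ σ τ, ξ (σ * τ) = ξ σ * (ξ τ).map σ) (w : ι → L) :
    ∑ σ, twistedAction ξ σ w ∈ twistedFixedPoints ξ := fun τ => by
  rw [map_sum]
  exact Fintype.sum_equiv (Equiv.mulLeft τ) _ _ fun σ => (twistedAction_mul hcocycle τ σ w).symm

theorem mul_map_eq_of_col_mem_twistedFixedPoints {M : Matrix ι ι L}
    (hM : ∀ j, M.col j ∈ twistedFixedPoints ξ) (σ : L ≃ₐ[k] L) : ξ σ * M.map σ = M := by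
  ext i j
  simpa [twistedAction_apply, mul_apply, mulVec, dotProduct] using congrFun (hM j σ) i

variable [DecidableEq ι]

theorem cocycle_one_eq_one (hunit : ∀ σ, IsUnit (ξ σ).det)
    (hcocycle : ∀ σ τ, ξ (σ * τ) = ξ σ * (ξ τ).map σ) : ξ 1 = 1 := by
  have h := hcocycle 1 1
  rw [one_mul, show (ξ 1).map ⇑(1 : L ≃ₐ[k] L) = ξ 1 from map_id (ξ 1)] at h
  exact ((isUnit_iff_isUnit_det _).2 (hunit 1)).mul_eq_left.1 h.symm

theorem twistedAction_one (hunit : ∀ σ, IsUnit (ξ σ).det)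
    (hcocycle : ∀ σ τ, ξ (σ * τ) = ξ σ * (ξ τ).map σ) (v : ι → L) :
    twistedAction ξ 1 v = v := by
  rw [twistedAction_apply, cocycle_one_eq_one hunit hcocycle, one_mulVec]
  rfl

variable [FiniteDimensional k L]

theorem dual_eq_zero_of_forall_twistedFixedPoints (hunit : ∀ σ, IsUnit (ξ σ).det)
    (hcocycle : ∀ σ τ, ξ (σ * τ) = ξ σ * (ξ τ).map σ) (φ : Module.Dual L (ι → L))
    (hφ : ∀ v ∈ twistedFixedPoints ξ, φ v = 0) : φ = 0 := by
  refine LinearMap.ext fun w => ?_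
  have hchar : ∑ σ, φ (twistedAction ξ σ w) • (σ : L → L) = 0 := funext fun c => by
    have := hφ _ (sum_twistedAction_mem_twistedFixedPoints hcocycle (c • w))
    simpa [twistedAction_smul, mul_comm] using this
  have := Fintype.linearIndependent_iff.1 (AlgEquiv.linearIndependent_coeFn k L) _ hchar 1
  rwa [twistedAction_one hunit hcocycle] at this

theorem span_twistedFixedPoints_eq_top (hunit : ∀ σ, IsUnit (ξ σ).det)
    (hcocycle : ∀ σ τ, ξ (σ * τ) = ξ σ * (ξ τ).map σ) :
    Submodule.span L (twistedFixedPoints ξ) = ⊤ := by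
  rw [← Submodule.dualAnnihilator_eq_bot_iff, Submodule.eq_bot_iff]
  intro φ hφ
  rw [Submodule.mem_dualAnnihilator] at hφ
  exact dual_eq_zero_of_forall_twistedFixedPoints hunit hcocycle φ
    fun v hv => hφ v (Submodule.subset_span hv)

end TwistedAction

theorem hilbert90_GLn_general {k L : Type*} [Field k] [Field L] [Algebra k L]
    [FiniteDimensional k L] (n : ℕ)
    (ξ : (L ≃ₐ[k] L) → Matrix (Fin n) (Fin n) L)
    (hunit : ∀ σ, IsUnit (ξ σ).det)
    (hcocycle : ∀ σ τ, ξ (σ * τ) = ξ σ * (ξ τ).map σ) :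
    ∃ M : Matrix (Fin n) (Fin n) L, IsUnit M.det ∧
      ∀ σ : L ≃ₐ[k] L, ξ σ = M * (M.map σ)⁻¹ := by
  obtain ⟨M, hMdet, hMcol⟩ :=
    exists_isUnit_det_col_mem (span_twistedFixedPoints_eq_top hunit hcocycle)
  refine ⟨M, hMdet, fun σ => ?_⟩
  have hσM : IsUnit (M.map σ).det := by
    simpa only [AlgEquiv.map_det, AlgEquiv.mapMatrix_apply] using hMdet.map σ
  calc ξ σ = ξ σ * M.map σ * (M.map σ)⁻¹ := (mul_nonsing_inv_cancel_right _ _ hσM).symm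
    _ = M * (M.map σ)⁻¹ := by rw [mul_map_eq_of_col_mem_twistedFixedPoints hMcol σ]

/-- **Hilbert's Theorem 90 for GLₙ.** For a finite Galois extension `L/k` and a 1-cocycle
`ξ : Gal(L/k) → GLₙ(L)` (for the entrywise Galois action on matrices), there is a matrix
`M ∈ GLₙ(L)` with `ξ(σ) = M · σ(M)⁻¹` for all `σ`. -/
theorem hilbert90_GLn {k L : Type*} [Field k] [Field L] [Algebra k L]
    [FiniteDimensional k L] [IsGalois k L] (n : ℕ) (hn : 1 ≤ n)
    (ξ : (L ≃ₐ[k] L) → Matrix (Fin n) (Fin n) L)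
    (hunit : ∀ σ, IsUnit (ξ σ).det)
    (hcocycle : ∀ σ τ, ξ (σ * τ) = ξ σ * (ξ τ).map σ) :
    ∃ M : Matrix (Fin n) (Fin n) L, IsUnit M.det ∧
      ∀ σ : L ≃ₐ[k] L, ξ σ = M * (M.map σ)⁻¹ :=
  hilbert90_GLn_general n ξ hunit hcocycle
end

section
/- Let L/k be a finite Galois extension of fields and let Q be a polynomial in three variables with coefficients in k. Let M be a matrix in GL_3(L) and for each σ in Gal(L/k) set ξ(σ) := M · σ(M)⁻¹ (σ acting entrywise on matrices). Assume that for every σ in Gal(L/k), substituting the linear forms determined by ξ(σ) into Q leaves Q unchanged: Q(ξ(σ)·(x,y,z)) = Q(x,y,z) as polynomials over L. Then every coefficient of the polynomial Q(M·(x,y,z)) (obtained by substituting into Q the three linear forms determined by M) lies in k, i.e. is fixed by every element of Gal(L/k). -/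
open MvPolynomial

noncomputable def msub {L : Type*} [CommRing L] (A : Matrix (Fin 3) (Fin 3) L)
    (P : MvPolynomial (Fin 3) L) : MvPolynomial (Fin 3) L :=
  MvPolynomial.aeval (fun i => ∑ j : Fin 3, MvPolynomial.C (A i j) * MvPolynomial.X j) P

lemma msub_map {L : Type*} [CommRing L] (f : L →+* L) (A : Matrix (Fin 3) (Fin 3) L)
    (P : MvPolynomial (Fin 3) L) :
    (msub A P).map f = msub (A.map f) (P.map f) := by
  induction P using MvPolynomial.induction_on with
  | C a => simp [msub]
  | add p q hp hq => simp only [msub, map_add] at *; rw [hp, hq]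
  | mul_X p i hp =>
    simp only [msub, _root_.map_mul, aeval_X] at *
    rw [hp]
    congr 1
    simp [Matrix.map_apply]

lemma msub_msub {L : Type*} [CommRing L] (A B : Matrix (Fin 3) (Fin 3) L)
    (P : MvPolynomial (Fin 3) L) :
    msub A (msub B P) = msub (B * A) P := by
  induction P using MvPolynomial.induction_on with
  | C a => simp [msub]
  | add p q hp hq => simp only [msub, map_add] at *; rw [hp, hq]
  | mul_X p i hp =>
    simp only [msub, _root_.map_mul, aeval_X] at *
    rw [hp]
    congr 1
    simp only [map_sum, _root_.map_mul, aeval_C, aeval_X, algebraMap_eq,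
      Matrix.mul_apply, Finset.mul_sum, Finset.sum_mul, map_sum]
    rw [Finset.sum_comm]
    exact Finset.sum_congr rfl fun j _ => Finset.sum_congr rfl fun l _ => by ring

/-- If `Q` has coefficients in `k`, `M ∈ GL₃(L)` and the coboundary `ξ(σ) = M·σ(M)⁻¹`
satisfies `Q(ξ(σ)·(x,y,z)) = Q(x,y,z)` for all `σ ∈ Gal(L/k)`, then the polynomial
`Q(M·(x,y,z))` is fixed coefficientwise by every element of `Gal(L/k)`, i.e. all of its
coefficients lie in `k`. -/
theorem coefficients_of_twisted_conic_are_rational {k L : Type*} [Field k] [Field L]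
    [Algebra k L] [FiniteDimensional k L] [IsGalois k L]
    (Q : MvPolynomial (Fin 3) k) (M : Matrix (Fin 3) (Fin 3) L) (hM : IsUnit M.det)
    (hstab : ∀ σ : L ≃ₐ[k] L,
      msub (M * (M.map σ)⁻¹) (Q.map (algebraMap k L)) = Q.map (algebraMap k L)) :
    ∀ σ : L ≃ₐ[k] L,
      (msub M (Q.map (algebraMap k L))).map (σ : L →+* L)
        = msub M (Q.map (algebraMap k L)) := by
  intro σ
  have hcomp : (σ : L →+* L).comp (algebraMap k L) = algebraMap k L := by
    ext x; simp
  have hQ : (Q.map (algebraMap k L)).map (σ : L →+* L) = Q.map (algebraMap k L) := by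
    rw [MvPolynomial.map_map, hcomp]
  have hcoe : M.map ⇑(σ : L →+* L) = M.map ⇑σ := rfl
  have hdet : IsUnit (M.map ⇑σ).det := by
    have h := (σ : L →+* L).map_det M
    rw [RingHom.mapMatrix_apply] at h
    rw [← hcoe, ← h]
    exact hM.map (σ : L →+* L)
  have key : M * (M.map ⇑σ)⁻¹ * (M.map ⇑σ) = M := by
    rw [mul_assoc, Matrix.nonsing_inv_mul _ hdet, mul_one]
  calc (msub M (Q.map (algebraMap k L))).map (σ : L →+* L)
      = msub (M.map ⇑σ) (Q.map (algebraMap k L)) := by rw [msub_map, hQ, hcoe]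
    _ = msub (M.map ⇑σ) (msub (M * (M.map ⇑σ)⁻¹) (Q.map (algebraMap k L))) := by
        rw [hstab σ]
    _ = msub M (Q.map (algebraMap k L)) := by rw [msub_msub, key]
end

section
/- Let E be a group and N a finite normal subgroup of E contained in the center of E, with quotient map π : E → E/N. Let H be a finite group whose order is coprime to the order of N, and let f : H → E/N be an injective group homomorphism. Then there exists an injective group homomorphism g : H → E such that π ∘ g = f. -/
/-!
Let `P ≤ E` be the preimage of `f.range`. Then `N` is a normal subgroup of `P` with quotient
`f.range`, whose order divides `|H|` and is therefore coprime to `|N|`. By Schur–Zassenhaus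
`N` has a complement in `P`, which maps isomorphically onto `f.range`; composing `f` with the
inverse of this isomorphism gives the lift, and it is injective because `f` is.
-/

namespace MonoidHom

variable {G Q : Type*} [Group G] [Group Q]

lemma ker_subgroupComap (ψ : G →* Q) (K : Subgroup Q) :
    (ψ.subgroupComap K).ker = ψ.ker.subgroupOf (K.comap ψ) := by
  ext x
  exact Subtype.ext_iff

theorem exists_comp_eq_id_of_coprime (ψ : G →* Q) (hψ : Function.Surjective ψ)
    (hcop : (Nat.card ψ.ker).Coprime (Nat.card Q)) :
    ∃ s : Q →* G, ψ.comp s = MonoidHom.id Q := by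
  have hindex : ψ.ker.index = Nat.card Q := by
    rw [Subgroup.index_ker, range_eq_top.mpr hψ, Subgroup.card_top]
  obtain ⟨C, hC⟩ := Subgroup.exists_left_complement'_of_coprime (hindex ▸ hcop)
  let e := QuotientGroup.quotientKerEquivOfSurjective ψ hψ
  refine ⟨C.subtype.comp (hC.QuotientMulEquiv.toMonoidHom.comp e.symm.toMonoidHom), ?_⟩
  ext q
  -- `hC.QuotientMulEquiv` inverts the projection `C → G ⧸ ψ.ker`.
  calc ψ (hC.QuotientMulEquiv (e.symm q))
      = e (hC.QuotientMulEquiv.symm (hC.QuotientMulEquiv (e.symm q))) := rfl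
    _ = q := by rw [MulEquiv.symm_apply_apply, MulEquiv.apply_symm_apply]

end MonoidHom

theorem QuotientGroup.exists_mk'_comp_eq_of_coprime {E H : Type*} [Group E] [Group H]
    (N : Subgroup E) [N.Normal] (hcop : (Nat.card H).Coprime (Nat.card N)) (f : H →* E ⧸ N) :
    ∃ g : H →* E, (QuotientGroup.mk' N).comp g = f := by
  let P := f.range.comap (QuotientGroup.mk' N)
  let ψ := (QuotientGroup.mk' N).subgroupComap f.range
  have hNP : N ≤ P := QuotientGroup.ker_mk' N ▸ MonoidHom.ker_le_comap _ _
  have hcard_ker : Nat.card ψ.ker = Nat.card N := by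
    rw [MonoidHom.ker_subgroupComap, QuotientGroup.ker_mk']
    exact Nat.card_congr (Subgroup.subgroupOfEquivOfLe hNP).toEquiv
  obtain ⟨s, hs⟩ := ψ.exists_comp_eq_id_of_coprime
    (MonoidHom.subgroupComap_surjective_of_surjective _ _ (QuotientGroup.mk'_surjective N))
    (hcard_ker ▸ (hcop.coprime_dvd_left (Subgroup.card_range_dvd f)).symm)
  refine ⟨P.subtype.comp (s.comp f.rangeRestrict), ?_⟩
  ext h
  exact congrArg Subtype.val (DFunLike.congr_fun hs (f.rangeRestrict h))

theorem lift_injection_through_central_quotient_general {E H : Type*} [Group E] [Group H]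
    (N : Subgroup E) [N.Normal]
    (hcop : Nat.Coprime (Nat.card H) (Nat.card N))
    (f : H →* E ⧸ N) (hf : Function.Injective f) :
    ∃ g : H →* E, Function.Injective g ∧ (QuotientGroup.mk' N).comp g = f := by
  obtain ⟨g, hg⟩ := QuotientGroup.exists_mk'_comp_eq_of_coprime N hcop f
  refine ⟨g, Function.Injective.of_comp (f := QuotientGroup.mk' N) ?_, hg⟩
  rwa [← MonoidHom.coe_comp, hg]

/-- If `N` is a finite central (hence normal) subgroup of `E` and `H` is a finite group of
order coprime to `|N|`, then any injective homomorphism `f : H → E/N` lifts to an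
injective homomorphism `g : H → E` with `π ∘ g = f`. -/
theorem lift_injection_through_central_quotient {E H : Type*} [Group E] [Group H]
    [Finite H] (N : Subgroup E) [N.Normal] [Finite N]
    (hcentral : N ≤ Subgroup.center E)
    (hcop : Nat.Coprime (Nat.card H) (Nat.card N))
    (f : H →* E ⧸ N) (hf : Function.Injective f) :
    ∃ g : H →* E, Function.Injective g ∧ (QuotientGroup.mk' N).comp g = f :=
  lift_injection_through_central_quotient_general N hcop f hf
end
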